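/- Let E, E₁, E₂ be iid standard exponentials, G ~ Gamma(α, 1) with α > 0 independent of them, and w ∈ (0,1) with w ∉ {1/2, 1/3}. Define V_j = (wE + (1−w)E_j)/G for j = 1,2. Then for x ≥ 0 and s ∈ {1, 2}: P(V₁ > x, …, V_s > x) = p_s(x) where p_s(x) = [sw/((s+1)w − 1)](1 + x/w)^{−α} − [(1−w)/((s+1)w − 1)](1 + sx/(1−w))^{−α}; in particular P(V₁ > x) = p₁(x) and P(V₁ > x, V₂ > x) = p₂(x). -/

import Mathlib

/-!
Put `T = wE + (1 - w)Y` with `Y = E₁` for `s = 1` and `Y = min(E₁, E₂) ~ Exp(2)` for `s = 2`.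
Since `G > 0` almost surely, the event `{V₁ > x, …, V_s > x}` is `{xG < T}` up to a null set.
The summands `wE ~ Exp(1/w)` and `(1 - w)Y ~ Exp(s/(1 - w))` are independent with distinct rates
(this is where `w ≠ 1/(s + 1)` enters), so `P(T > t)` is a combination of two exponentials
`e^{-kt}`. Integrating against the law of the independent `G` replaces each `e^{-kxG}` by the
Gamma Laplace transform `E[e^{-kxG}] = (1 + kx)^{-α}`.
-/

open MeasureTheory ProbabilityTheory Real

namespace ProbabilityTheory

open Set

lemma integral_gammaMeasure {a r : ℝ} (ha : 0 < a) (hr : 0 < r) (f : ℝ → ℝ) :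
    ∫ x, f x ∂gammaMeasure a r = ∫ x in Ioi 0, gammaPDFReal a r x * f x := by
  rw [gammaMeasure, integral_withDensity_eq_integral_toReal_smul
    (show Measurable (gammaPDF a r) from (measurable_gammaPDFReal a r).ennreal_ofReal)
    (ae_of_all _ fun _ => ENNReal.ofReal_lt_top),
    ← integral_Ici_eq_integral_Ioi, setIntegral_eq_integral_of_forall_compl_eq_zero]
  · simp only [gammaPDF, ENNReal.toReal_ofReal (gammaPDFReal_nonneg ha hr _), smul_eq_mul]
  · intro x (hx : ¬ 0 ≤ x)
    simp [gammaPDFReal, hx]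

lemma integral_exp_neg_mul_gammaMeasure {a r k : ℝ} (ha : 0 < a) (hr : 0 < r) (hk : -r < k) :
    ∫ x, rexp (-(k * x)) ∂gammaMeasure a r = (r / (r + k)) ^ a := by
  have hrk : 0 < r + k := by linarith
  rw [integral_gammaMeasure ha hr]
  calc ∫ x in Ioi 0, gammaPDFReal a r x * rexp (-(k * x))
      = ∫ x in Ioi 0, r ^ a / Gamma a * (x ^ (a - 1) * rexp (-((r + k) * x))) := by
        refine setIntegral_congr_fun measurableSet_Ioi fun x (hx : 0 < x) => ?_
        rw [gammaPDFReal, if_pos hx.le, show -((r + k) * x) = -(r * x) + -(k * x) by ring,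
          exp_add]
        ring
    _ = (r / (r + k)) ^ a := by
        rw [integral_const_mul, integral_rpow_mul_exp_neg_mul_Ioi ha hrk,
          div_rpow hr.le hrk.le, div_rpow zero_le_one hrk.le, one_rpow]
        field_simp [(Gamma_pos_of_pos ha).ne']

lemma integrable_exp_neg_mul_gammaMeasure {a r k : ℝ} (ha : 0 < a) (hr : 0 < r) (hk : -r < k) :
    Integrable (fun x => rexp (-(k * x))) (gammaMeasure a r) :=
  Integrable.of_integral_ne_zero <| by
    rw [integral_exp_neg_mul_gammaMeasure ha hr hk]
    exact (rpow_pos_of_pos (div_pos hr (by linarith)) a).ne'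

lemma ae_pos_gammaMeasure (a r : ℝ) : ∀ᵐ x ∂gammaMeasure a r, 0 < x := by
  rw [ae_iff]
  simp only [not_lt]
  change gammaMeasure a r (Iic 0) = 0
  rw [gammaMeasure, withDensity_apply _ measurableSet_Iic, setLIntegral_congr Iio_ae_eq_Iic.symm]
  exact lintegral_gammaPDF_of_nonpos le_rfl

lemma expMeasure_Ioi {r : ℝ} (hr : 0 < r) (t : ℝ) :
    expMeasure r (Ioi t) = ENNReal.ofReal (rexp (-(r * max t 0))) := by
  have := isProbabilityMeasure_expMeasure hr
  rw [← compl_Iic, prob_compl_eq_one_sub measurableSet_Iic, ← ofReal_cdf, cdf_expMeasure_eq hr,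
    ← ENNReal.ofReal_one]
  rcases le_total 0 t with ht | ht
  · have hexp : rexp (-(r * t)) ≤ 1 := exp_le_one_iff.2 (by nlinarith)
    rw [if_pos ht, max_eq_left ht, ← ENNReal.ofReal_sub _ (sub_nonneg.2 hexp)]
    ring_nf
  · rw [max_eq_right ht]
    split_ifs with h0
    · simp [le_antisymm ht h0]
    · simp

lemma measureReal_expMeasure_Ioi {r : ℝ} (hr : 0 < r) (t : ℝ) :
    (expMeasure r).real (Ioi t) = rexp (-(r * max t 0)) := by
  rw [measureReal_def, expMeasure_Ioi hr, ENNReal.toReal_ofReal (exp_pos _).le]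

lemma eq_expMeasure_of_measure_Ioi {ν : Measure ℝ} [IsProbabilityMeasure ν] {r : ℝ}
    (hr : 0 < r)
    (h : ∀ t, ν (Ioi t) = ENNReal.ofReal (rexp (-(r * max t 0)))) : ν = expMeasure r := by
  have := isProbabilityMeasure_expMeasure hr
  refine Measure.ext_of_Iic _ _ fun t => ?_
  rw [← compl_Ioi, prob_compl_eq_one_sub measurableSet_Ioi,
    prob_compl_eq_one_sub measurableSet_Ioi, h, expMeasure_Ioi hr]

lemma map_const_mul_expMeasure {c r : ℝ} (hc : 0 < c) (hr : 0 < r) :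
    (expMeasure r).map (c * ·) = expMeasure (r / c) := by
  have := isProbabilityMeasure_expMeasure hr
  have := Measure.isProbabilityMeasure_map (μ := expMeasure r)
    (measurable_const_mul c).aemeasurable
  refine eq_expMeasure_of_measure_Ioi (div_pos hr hc) fun t => ?_
  rw [Measure.map_apply (measurable_const_mul c) measurableSet_Ioi, preimage_const_mul_Ioi₀ _ hc,
    expMeasure_Ioi hr, ← zero_div c, max_div_div_right hc.le, zero_div, mul_div_assoc']
  ring_nf

lemma integral_Ioi_exp_mul_exp_max_sub {a b c : ℝ} (ha : 0 < a) (hab : a ≠ b) (hc : 0 ≤ c) :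
    ∫ x in Ioi 0, a * rexp (-(a * x)) * rexp (-(b * max (c - x) 0))
      = (a * rexp (-(b * c)) - b * rexp (-(a * c))) / (a - b) := by
  have hba : b - a ≠ 0 := sub_ne_zero.2 hab.symm
  have hcont : Continuous fun x => a * rexp (-(a * x)) * rexp (-(b * max (c - x) 0)) := by
    fun_prop
  have hnear : EqOn (fun x => a * rexp (-(a * x)) * rexp (-(b * max (c - x) 0)))
      (fun x => a * rexp (-(b * c)) * rexp ((b - a) * x)) (Ioc 0 c) := by
    intro x hx
    dsimp only
    rw [max_eq_left (sub_nonneg.2 hx.2), mul_assoc, ← exp_add, mul_assoc, ← exp_add]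
    ring_nf
  have hfar : EqOn (fun x => a * rexp (-(a * x)) * rexp (-(b * max (c - x) 0)))
      (fun x => a * rexp (-a * x)) (Ioi c) := by
    intro x (hx : c < x)
    simp [max_eq_right (sub_nonpos.2 hx.le)]
  have hfar_int : IntegrableOn (fun x => a * rexp (-a * x)) (Ioi c) :=
    (integrableOn_exp_mul_Ioi (neg_lt_zero.2 ha) c).const_mul a
  rw [← Ioc_union_Ioi_eq_Ioi hc, setIntegral_union Ioc_disjoint_Ioi_same measurableSet_Ioi
      hcont.integrableOn_Ioc (hfar_int.congr_fun hfar.symm measurableSet_Ioi),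
    setIntegral_congr_fun measurableSet_Ioc hnear, setIntegral_congr_fun measurableSet_Ioi hfar,
    integral_const_mul, integral_const_mul, integral_exp_mul_Ioi (neg_lt_zero.2 ha),
    ← intervalIntegral.integral_of_le hc, intervalIntegral.integral_comp_mul_left _ hba,
    integral_exp]
  have hkey : rexp (-(b * c)) * rexp (c * (b - a)) = rexp (-(a * c)) := by
    rw [← exp_add]; ring_nf
  rw [smul_eq_mul, mul_zero, exp_zero, eq_div_iff (sub_ne_zero.2 hab)]
  field_simp
  linear_combination (a * (a - b)) * hkey

lemma iIndepFun.indepFun_prodMk₃ {Ω ι β : Type*} [MeasurableSpace Ω] {μ : Measure Ω}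
    [DecidableEq ι] [MeasurableSpace β]
    {f : ι → Ω → β} (hf : iIndepFun f μ) (hmeas : ∀ i, Measurable (f i)) {i j k l : ι}
    (hil : i ≠ l) (hjl : j ≠ l) (hkl : k ≠ l) :
    IndepFun (fun ω => (f i ω, f j ω, f k ω)) (f l) μ := by
  have hdisj : Disjoint ({i, j, k} : Finset ι) {l} := by simp [hil.symm, hjl.symm, hkl.symm]
  exact (hf.indepFun_finset _ _ hdisj hmeas).comp
    (φ := fun v => (v ⟨i, by simp⟩, v ⟨j, by simp⟩, v ⟨k, by simp⟩))
    (ψ := fun v => v ⟨l, by simp⟩)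
    (_mγ := inferInstance) (_mγ' := inferInstance)
    ((measurable_pi_apply _).prodMk ((measurable_pi_apply _).prodMk (measurable_pi_apply _)))
    (measurable_pi_apply _)

lemma IndepFun.measureReal_lt_eq_integral {Ω α : Type*} [MeasurableSpace Ω] [MeasurableSpace α]
    {μ : Measure Ω} [IsFiniteMeasure μ] {X : Ω → α} {Y : Ω → ℝ} (hX : Measurable X)
    (hY : Measurable Y) (hXY : IndepFun X Y μ) {f : α → ℝ} (hf : Measurable f) :
    μ.real {ω | f (X ω) < Y ω} = ∫ x, (μ.map Y).real (Ioi (f x)) ∂(μ.map X) := by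
  have hs : MeasurableSet {p : α × ℝ | f p.1 < p.2} :=
    measurableSet_lt (hf.comp measurable_fst) measurable_snd
  rw [show {ω | f (X ω) < Y ω} = (fun ω => (X ω, Y ω)) ⁻¹' {p | f p.1 < p.2} from rfl,
    ← map_measureReal_apply (hX.prodMk hY) hs,
    (indepFun_iff_map_prod_eq_prod_map_map hX.aemeasurable hY.aemeasurable).1 hXY,
    measureReal_def, Measure.prod_apply hs, ← integral_toReal
      (measurable_measure_prodMk_left hs).aemeasurable (ae_of_all _ fun _ => measure_lt_top _ _)]
  rfl

section RandomVariables

variable {Ω : Type*} [MeasurableSpace Ω] {μ : Measure Ω} [IsProbabilityMeasure μ]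

lemma IndepFun.map_min_eq_expMeasure {X Y : Ω → ℝ} (hX : Measurable X) (hY : Measurable Y)
    (hXY : IndepFun X Y μ) {a b : ℝ} (ha : 0 < a) (hb : 0 < b) (hXa : μ.map X = expMeasure a)
    (hYb : μ.map Y = expMeasure b) :
    μ.map (fun ω => min (X ω) (Y ω)) = expMeasure (a + b) := by
  have := Measure.isProbabilityMeasure_map (μ := μ) (hX.min hY).aemeasurable
  refine eq_expMeasure_of_measure_Ioi (add_pos ha hb) fun t => ?_
  have hpre : (fun ω => min (X ω) (Y ω)) ⁻¹' Ioi t = X ⁻¹' Ioi t ∩ Y ⁻¹' Ioi t := by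
    ext ω; simp
  rw [Measure.map_apply (hX.min hY) measurableSet_Ioi, hpre,
    hXY.measure_inter_preimage_eq_mul _ _ measurableSet_Ioi measurableSet_Ioi,
    ← Measure.map_apply hX measurableSet_Ioi, ← Measure.map_apply hY measurableSet_Ioi,
    hXa, hYb, expMeasure_Ioi ha, expMeasure_Ioi hb, ← ENNReal.ofReal_mul (exp_pos _).le, ← exp_add]
  ring_nf

lemma IndepFun.measureReal_map_add_Ioi_of_expMeasure {X Y : Ω → ℝ} (hX : Measurable X)
    (hY : Measurable Y) (hXY : IndepFun X Y μ) {a b : ℝ} (ha : 0 < a) (hb : 0 < b)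
    (hab : a ≠ b) (hXa : μ.map X = expMeasure a) (hYb : μ.map Y = expMeasure b) {c : ℝ}
    (hc : 0 ≤ c) :
    (μ.map (fun ω => X ω + Y ω)).real (Ioi c)
      = (a * rexp (-(b * c)) - b * rexp (-(a * c))) / (a - b) := by
  have hset : (fun ω => X ω + Y ω) ⁻¹' Ioi c = {ω | (fun x => c - x) (X ω) < Y ω} := by
    ext ω; simp [sub_lt_iff_lt_add']
  rw [map_measureReal_apply (f := fun ω => X ω + Y ω) (hX.add hY) measurableSet_Ioi, hset,
    hXY.measureReal_lt_eq_integral hX hY (f := fun x => c - x) (by fun_prop), hXa, hYb,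
    expMeasure, integral_gammaMeasure one_pos ha, ← integral_Ioi_exp_mul_exp_max_sub ha hab hc]
  refine setIntegral_congr_fun measurableSet_Ioi fun x (hx : 0 < x) => ?_
  simp [gammaPDFReal, hx.le, measureReal_expMeasure_Ioi hb]

lemma IndepFun.measureReal_mul_lt_of_gammaMeasure {G T : Ω → ℝ} (hG : Measurable G)
    (hT : Measurable T) (hGT : IndepFun G T μ) {α r : ℝ} (hα : 0 < α) (hr : 0 < r)
    (hGlaw : μ.map G = gammaMeasure α r) {A B β γ : ℝ} (hβ : 0 ≤ β) (hγ : 0 ≤ γ)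
    (hTail : ∀ t, 0 ≤ t →
      (μ.map T).real (Ioi t) = A * rexp (-(β * t)) + B * rexp (-(γ * t)))
    {x : ℝ} (hx : 0 ≤ x) :
    μ.real {ω | x * G ω < T ω} = A * (r / (r + β * x)) ^ α + B * (r / (r + γ * x)) ^ α := by
  have hβx : -r < β * x := by nlinarith
  have hγx : -r < γ * x := by nlinarith
  rw [hGT.measureReal_lt_eq_integral hG hT (f := fun g => x * g) (by fun_prop), hGlaw]
  calc ∫ g, (μ.map T).real (Ioi (x * g)) ∂gammaMeasure α r
      = ∫ g, A * rexp (-(β * x * g)) + B * rexp (-(γ * x * g)) ∂gammaMeasure α r := by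
        refine integral_congr_ae ?_
        filter_upwards [ae_pos_gammaMeasure α r] with g hg
        rw [hTail _ (mul_nonneg hx hg.le)]
        ring_nf
    _ = A * (r / (r + β * x)) ^ α + B * (r / (r + γ * x)) ^ α := by
        rw [integral_add ((integrable_exp_neg_mul_gammaMeasure hα hr hβx).const_mul A)
          ((integrable_exp_neg_mul_gammaMeasure hα hr hγx).const_mul B), integral_const_mul,
          integral_const_mul, integral_exp_neg_mul_gammaMeasure hα hr hβx,
          integral_exp_neg_mul_gammaMeasure hα hr hγx]

lemma measureReal_mul_lt_of_expMeasure_of_gammaMeasure {E Y G : Ω → ℝ} (hE : Measurable E)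
    (hY : Measurable Y) (hG : Measurable G) (hEY : IndepFun E Y μ)
    (hGEY : IndepFun G (fun ω => (E ω, Y ω)) μ) {α s w x : ℝ} (hα : 0 < α) (hs : 0 < s)
    (hw : w ∈ Ioo 0 1) (hsw : (s + 1) * w ≠ 1) (hElaw : μ.map E = expMeasure 1)
    (hYlaw : μ.map Y = expMeasure s) (hGlaw : μ.map G = gammaMeasure α 1) (hx : 0 ≤ x) :
    μ.real {ω | x * G ω < w * E ω + (1 - w) * Y ω}
      = s * w / ((s + 1) * w - 1) * (1 + x / w) ^ (-α)
        - (1 - w) / ((s + 1) * w - 1) * (1 + s * x / (1 - w)) ^ (-α) := by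
  obtain ⟨hw0, hw1⟩ := hw
  have hv : 0 < 1 - w := sub_pos.2 hw1
  have hwE : μ.map (fun ω => w * E ω) = expMeasure (1 / w) := by
    rw [← map_const_mul_expMeasure hw0 one_pos, ← hElaw,
      Measure.map_map (measurable_const_mul w) hE]
    rfl
  have hvY : μ.map (fun ω => (1 - w) * Y ω) = expMeasure (s / (1 - w)) := by
    rw [← map_const_mul_expMeasure hv hs, ← hYlaw, Measure.map_map (measurable_const_mul _) hY]
    rfl
  have hrates : 1 / w ≠ s / (1 - w) := by
    rw [Ne, div_eq_div_iff hw0.ne' hv.ne']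
    contrapose! hsw
    linarith
  have hTail : ∀ t, 0 ≤ t → (μ.map fun ω => w * E ω + (1 - w) * Y ω).real (Ioi t)
      = (1 / w) / (1 / w - s / (1 - w)) * rexp (-(s / (1 - w) * t))
        + -(s / (1 - w)) / (1 / w - s / (1 - w)) * rexp (-(1 / w * t)) := fun t ht => by
    have hind : IndepFun (fun ω => w * E ω) (fun ω => (1 - w) * Y ω) μ :=
      hEY.comp (measurable_const_mul w) (measurable_const_mul (1 - w))
    refine (hind.measureReal_map_add_Ioi_of_expMeasure (by fun_prop) (by fun_prop)
      (one_div_pos.2 hw0) (div_pos hs hv) hrates hwE hvY ht).trans ?_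
    ring
  have hGT : IndepFun G (fun ω => w * E ω + (1 - w) * Y ω) μ :=
    hGEY.comp measurable_id (by fun_prop : Measurable fun p : ℝ × ℝ => w * p.1 + (1 - w) * p.2)
  rw [hGT.measureReal_mul_lt_of_gammaMeasure hG (by fun_prop) hα one_pos hGlaw (div_pos hs hv).le
    (one_div_pos.2 hw0).le hTail hx]
  have hpow : ∀ k : ℝ, 0 ≤ k → (1 / (1 + k)) ^ α = (1 + k) ^ (-α) := fun k hk => by
    rw [div_rpow zero_le_one (by linarith), one_rpow, rpow_neg (by linarith), one_div]
  rw [hpow _ (by positivity), hpow _ (by positivity),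
    show s / (1 - w) * x = s * x / (1 - w) by ring, show 1 / w * x = x / w by ring]
  have hd : (s + 1) * w - 1 ≠ 0 := sub_ne_zero.2 hsw
  have hden : 1 / w - s / (1 - w) = -((s + 1) * w - 1) / (w * (1 - w)) := by
    field_simp
    ring
  have hA : (1 / w) / (1 / w - s / (1 - w)) = -((1 - w) / ((s + 1) * w - 1)) := by
    rw [hden]
    field_simp
  have hB : -(s / (1 - w)) / (1 / w - s / (1 - w)) = s * w / ((s + 1) * w - 1) := by
    rw [hden]
    field_simp
  rw [hA, hB]
  ring

end RandomVariables

end ProbabilityTheory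

/-- Marginal and joint survival functions of `V_j = (wE + (1-w)E_j)/G`, `j = 1,2`, where
`E, E₁, E₂` are iid standard exponential and `G ~ Gamma(α,1)` independent,
`w ∈ (0,1) \ {1/2, 1/3}`: for `x ≥ 0` and `s ∈ {1,2}`,
`P(V₁ > x, …, V_s > x) = p_s(x)` with
`p_s(x) = [sw/((s+1)w-1)](1+x/w)^{-α} - [(1-w)/((s+1)w-1)](1+sx/(1-w))^{-α}`. -/
theorem joint_surv_V1_V2
    {Ω : Type*} [MeasurableSpace Ω] (μ : Measure Ω) [IsProbabilityMeasure μ]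
    (E E₁ E₂ G : Ω → ℝ) (hEm : Measurable E) (hE₁m : Measurable E₁)
    (hE₂m : Measurable E₂) (hGm : Measurable G)
    (α : ℝ) (hα : 0 < α) (w : ℝ) (hw : w ∈ Set.Ioo (0 : ℝ) 1)
    (hw2 : w ≠ 1 / 2) (hw3 : w ≠ 1 / 3)
    (hE : μ.map E = expMeasure 1) (hE₁ : μ.map E₁ = expMeasure 1)
    (hE₂ : μ.map E₂ = expMeasure 1) (hG : μ.map G = gammaMeasure α 1)
    (hind : iIndepFun (m := fun _ : Fin 4 => (inferInstance : MeasurableSpace ℝ))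
      ![E, E₁, E₂, G] μ) :
    ∀ x : ℝ, 0 ≤ x →
      (let p : ℝ → ℝ → ℝ := fun s x =>
        s * w / ((s + 1) * w - 1) * (1 + x / w) ^ (-α)
          - (1 - w) / ((s + 1) * w - 1) * (1 + s * x / (1 - w)) ^ (-α)
      (μ {ω | (w * E ω + (1 - w) * E₁ ω) / G ω > x}).toReal = p 1 x ∧
      (μ {ω | (w * E ω + (1 - w) * E₁ ω) / G ω > x ∧
              (w * E ω + (1 - w) * E₂ ω) / G ω > x}).toReal = p 2 x) := by
  intro x hx
  have hmeas : ∀ i, Measurable (![E, E₁, E₂, G] i) := fun i => by fin_cases i <;> assumption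
  have hGE : IndepFun G (fun ω => (E ω, E₁ ω, E₂ ω)) μ :=
    (hind.indepFun_prodMk₃ hmeas (i := 0) (j := 1) (k := 2) (l := 3) (by decide) (by decide)
      (by decide)).symm
  have hEmin : IndepFun E (fun ω => min (E₁ ω) (E₂ ω)) μ :=
    (hind.indepFun_prodMk hmeas 1 2 0 (by decide) (by decide)).symm.comp measurable_id
      (measurable_fst.min measurable_snd)
  have hminLaw : μ.map (fun ω => min (E₁ ω) (E₂ ω)) = expMeasure 2 := by
    rw [(hind.indepFun (show (1 : Fin 4) ≠ 2 by decide)).map_min_eq_expMeasure hE₁m hE₂m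
      one_pos one_pos hE₁ hE₂]
    norm_num
  have hGpos : ∀ᵐ ω ∂μ, 0 < G ω :=
    ae_of_ae_map hGm.aemeasurable (hG ▸ ae_pos_gammaMeasure α 1)
  have hV₁ : {ω | (w * E ω + (1 - w) * E₁ ω) / G ω > x}
      =ᵐ[μ] {ω | x * G ω < w * E ω + (1 - w) * E₁ ω} :=
    Filter.eventuallyEq_set.2 (hGpos.mono fun ω hω => lt_div_iff₀ hω)
  have hV₁₂ : {ω | (w * E ω + (1 - w) * E₁ ω) / G ω > x ∧
      (w * E ω + (1 - w) * E₂ ω) / G ω > x}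
      =ᵐ[μ] {ω | x * G ω < w * E ω + (1 - w) * min (E₁ ω) (E₂ ω)} := by
    refine Filter.eventuallyEq_set.2 (hGpos.mono fun ω hω => ?_)
    change _ ∧ _ ↔ _
    rw [gt_iff_lt, gt_iff_lt, lt_div_iff₀ hω, lt_div_iff₀ hω, ← lt_min_iff,
      min_add_add_left, ← mul_min_of_nonneg _ _ (sub_nonneg.2 hw.2.le)]
    rfl
  refine ⟨?_, ?_⟩
  · rw [← measureReal_def, measureReal_congr hV₁]
    exact measureReal_mul_lt_of_expMeasure_of_gammaMeasure hEm hE₁m hGm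
      (hind.indepFun (show (0 : Fin 4) ≠ 1 by decide))
      (hGE.comp measurable_id (by fun_prop : Measurable fun p : ℝ × ℝ × ℝ => (p.1, p.2.1)))
      hα one_pos hw (by contrapose! hw2; linarith) hE hE₁ hG hx
  · rw [← measureReal_def, measureReal_congr hV₁₂]
    exact measureReal_mul_lt_of_expMeasure_of_gammaMeasure hEm (hE₁m.min hE₂m) hGm hEmin
      (hGE.comp measurable_id
        (by fun_prop : Measurable fun p : ℝ × ℝ × ℝ => (p.1, min p.2.1 p.2.2)))
      hα two_pos hw (by contrapose! hw3; linarith) hE hminLaw hG hx
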